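/- Let (C, ⊗, 𝟙) be a monoidal category possessing a zero object. Let A be a monoid object of C with unit η : 𝟙 → A, and let E be a left A-module object with action ρ : A ⊗ E → E. If F is an object of C such that A ⊗ F is a zero object of C, then every morphism F → E in C factors through the zero object, i.e. equals the zero morphism; in particular the hom-set Hom_C(F, E) has exactly one element. -/

import Mathlib

open CategoryTheory CategoryTheory.Limits MonoidalCategory

universe v u

namespace CategoryTheory.ModObj

open MonoidalLeftAction CategoryTheory.MonObj

variable {C D : Type*} [Category C] [MonoidalCategory C] [Category D] [MonoidalLeftAction C D]
  {M : C} [MonObj M] {F X : D} [ModObj M X]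

variable (M) in
lemma eq_leftUnitor_inv_comp_one_comp_smul (f : F ⟶ X) :
    f = (λₗ F).inv ≫ η ⊵ₗ F ≫ M ⊴ₗ f ≫ γ[M, X] := by
  rw [← action_exchange_assoc, one_smul, actionUnitIso_inv_naturality_assoc, Iso.inv_hom_id,
    Category.comp_id]

lemma subsingleton_hom_of_isZero_action (hF : IsZero (M ⊙ₗ F)) : Subsingleton (F ⟶ X) :=
  ⟨fun f g => by
    rw [eq_leftUnitor_inv_comp_one_comp_smul M f, eq_leftUnitor_inv_comp_one_comp_smul M g,
      hF.eq_of_src (M ⊴ₗ f ≫ γ) (M ⊴ₗ g ≫ γ)]⟩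

end CategoryTheory.ModObj

theorem module_is_local_general
    {C : Type u} [Category.{v} C] [MonoidalCategory C]
    (A : Mon C) (E : Mod C A.X) (F : C)
    (hF : IsZero (MonoidalCategory.tensorObj A.X F)) :
    (∀ f : F ⟶ E.X, ∃ (Z : C) (_ : IsZero Z) (g : F ⟶ Z) (h : Z ⟶ E.X), f = g ≫ h)
      ∧ Nonempty (Unique (F ⟶ E.X)) := by
  have : Subsingleton (F ⟶ E.X) := ModObj.subsingleton_hom_of_isZero_action (M := A.X) hF
  constructor
  · intro f
    exact ⟨A.X ⊗ F, hF, (λ_ F).inv ≫ MonObj.one ▷ F, A.X ◁ f ≫ ModObj.smul (M := A.X),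
      by simpa using ModObj.eq_leftUnitor_inv_comp_one_comp_smul A.X f⟩
  · exact ⟨uniqueOfSubsingleton ((λ_ F).inv ≫ MonObj.one ▷ F ≫ hF.to_ E.X)⟩

/-- Proposition 8.9 of the paper, hom-set form: in a monoidal category with a
zero object, if `A` is a monoid object, `E` a left `A`-module object and `F` an
object with `A ⊗ F` a zero object, then every morphism `F ⟶ E` factors through
a zero object, and the hom-set `F ⟶ E` has exactly one element. -/
theorem module_is_local
    {C : Type u} [Category.{v} C] [MonoidalCategory C] [HasZeroObject C]
    (A : Mon C) (E : Mod C A.X) (F : C)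
    (hF : IsZero (MonoidalCategory.tensorObj A.X F)) :
    (∀ f : F ⟶ E.X, ∃ (Z : C) (_ : IsZero Z) (g : F ⟶ Z) (h : Z ⟶ E.X), f = g ≫ h)
      ∧ Nonempty (Unique (F ⟶ E.X)) :=
  module_is_local_general A E F hF
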